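/- Let {S(t)}_{t≥0} be a dissipative semigroup on a complete metric space (X,d) with positively invariant bounded absorbing set 𝓑₀. Assume there exist T > 0, η ∈ [0,1), a function g: (ℝ⁺)^m → ℝ⁺ nondecreasing in each variable, vanishing and continuous at the origin, a function φ: X × X → ℝ⁺ such that every sequence {yₙ} ⊆ 𝓑₀ has a subsequence {y_{n_k}} with lim_{k→∞} lim_{l→∞} φ(y_{n_k}, y_{n_l}) = 0, and pseudometrics ϱ₁,…,ϱ_m precompact on 𝓑₀, satisfying d(S(T)y₁,S(T)y₂) ≤ η d(y₁,y₂) + g(ϱ₁(y₁,y₂),…,ϱ_m(y₁,y₂)) + φ(y₁,y₂) for all y₁,y₂ ∈ 𝓑₀. Then α(S(t)𝓑₀) ≤ 2η^{t/T − 1}α(𝓑₀) for all t ≥ T. -/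

import Mathlib

open Set Metric Filter

noncomputable def kuratowski {X : Type*} [MetricSpace X] (A : Set X) : ℝ :=
  sInf {δ : ℝ | 0 < δ ∧ ∃ 𝓒 : Finset (Set X), (A ⊆ ⋃ s ∈ 𝓒, s) ∧ ∀ s ∈ 𝓒, Metric.diam s < δ}

/-!
The proof runs through the separation measure `istratescu A`, the infimum of the `r > 0` for
which `A` contains no `r`-separated sequence; it satisfies
`istratescu ≤ kuratowski ≤ 2 * istratescu`.
The quasi-stability estimate contracts this measure by `η`: if `S T yₙ` were `r'`-separated with
`r' > η r` while `(yₙ)` has no `r`-separated subsequence, infinite Ramsey gives a subsequence with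
all mutual distances `< r`, and after extracting further subsequences along which the `ϱᵢ` are
Cauchy and the iterated limit of `φ` vanishes, some pair of images is closer than `r'`.
Iterating over `⌊t / T⌋ ≥ t / T - 1` periods, the factor `2` is paid only once, on the way back
to `kuratowski`.
-/

open Topology

theorem exists_strictMono_forall_or_forall_not (P : ℕ → ℕ → Prop) :
    ∃ k : ℕ → ℕ, StrictMono k ∧
      ((∀ i j, i < j → P (k i) (k j)) ∨ ∀ i j, i < j → ¬P (k i) (k j)) := by
  classical
  set U := hyperfilter ℕ
  -- `c` is the colour that a `U`-large set of points gives to a `U`-large set of later points.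
  set c := ∀ᶠ a in (U : Filter ℕ), ∀ᶠ b in (U : Filter ℕ), P a b
  have hc : ∀ᶠ a in (U : Filter ℕ), ∀ᶠ b in (U : Filter ℕ), (P a b ↔ c) := by
    by_cases h : c
    · exact h.mono fun a ha => ha.mono fun b hb => iff_of_true hb h
    · exact (Ultrafilter.eventually_not.2 h).mono fun a ha =>
        (Ultrafilter.eventually_not.2 ha).mono fun b hb => iff_of_false hb h
  have hgt : ∀ a, ∀ᶠ b in (U : Filter ℕ), a < b := fun a =>
    hyperfilter_le_cofinite (Nat.cofinite_eq_atTop ▸ eventually_gt_atTop a)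
  obtain ⟨k, -, hk⟩ := exists_seq_of_forall_finset_exists
    (fun a => ∀ᶠ b in (U : Filter ℕ), (P a b ↔ c)) (fun a b => a < b ∧ (P a b ↔ c))
    fun s hs => (hc.and ((eventually_all_finset s).2 fun a ha => (hgt a).and (hs a ha))).exists
  refine ⟨k, fun i j hij => (hk i j hij).1, ?_⟩
  by_cases h : c
  · exact Or.inl fun i j hij => (hk i j hij).2.2 h
  · exact Or.inr fun i j hij => mt (hk i j hij).2.1 h

theorem exists_strictMono_forall_of_finite {ι α : Type*} [Finite ι] {s : Set α}
    (P : ι → (ℕ → α) → Prop)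
    (hP : ∀ i u (k : ℕ → ℕ), StrictMono k → P i u → P i (u ∘ k))
    (hex : ∀ i (u : ℕ → α), (∀ n, u n ∈ s) → ∃ k : ℕ → ℕ, StrictMono k ∧ P i (u ∘ k))
    (u : ℕ → α) (hu : ∀ n, u n ∈ s) : ∃ k : ℕ → ℕ, StrictMono k ∧ ∀ i, P i (u ∘ k) := by
  classical
  have : Fintype ι := Fintype.ofFinite ι
  suffices ∀ t : Finset ι, ∃ k : ℕ → ℕ, StrictMono k ∧ ∀ i ∈ t, P i (u ∘ k) by
    simpa using this Finset.univ
  intro t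
  induction t using Finset.induction_on with
  | empty => exact ⟨id, strictMono_id, by simp⟩
  | insert a t _ ih =>
    obtain ⟨k, hk, ht⟩ := ih
    obtain ⟨k', hk', ha⟩ := hex a (u ∘ k) fun n => hu (k n)
    refine ⟨k ∘ k', hk.comp hk', ?_⟩
    simp only [Finset.mem_insert, forall_eq_or_imp]
    exact ⟨ha, fun i hi => hP i (u ∘ k) k' hk' (ht i hi)⟩

section

variable {X : Type*}

theorem image_subset_iterate_image {S : ℝ → X → X}
    (hS : ∀ s t : ℝ, 0 ≤ s → 0 ≤ t → ∀ x, S (s + t) x = S s (S t x)) {B : Set X}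
    (hB : ∀ t : ℝ, 0 ≤ t → S t '' B ⊆ B) {T : ℝ} (hT : 0 ≤ T) (n : ℕ) {t : ℝ}
    (ht : (n + 1) * T ≤ t) : S t '' B ⊆ (S T)^[n + 1] '' B := by
  have hsplit : ∀ t, T ≤ t → ∀ x, S t x = S T (S (t - T) x) := fun t ht x => by
    rw [← hS _ _ hT (sub_nonneg.2 ht), add_sub_cancel]
  induction n generalizing t with
  | zero =>
    rintro _ ⟨b, hb, rfl⟩
    have hTt : T ≤ t := by simpa using ht
    exact ⟨S (t - T) b, hB _ (sub_nonneg.2 hTt) (mem_image_of_mem _ hb), (hsplit t hTt b).symm⟩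
  | succ n ih =>
    rintro _ ⟨b, hb, rfl⟩
    push_cast at ht
    have hTt : T ≤ t := by nlinarith [mul_nonneg n.cast_nonneg hT]
    obtain ⟨x, hx, hxb⟩ := ih (t := t - T) (by linarith) (mem_image_of_mem _ hb)
    exact ⟨x, hx, by rw [Function.iterate_succ_apply', hxb, hsplit t hTt]⟩

def IsPrecompactOn (ρ : X → X → ℝ) (B : Set X) : Prop :=
  ∀ u : ℕ → X, (∀ n, u n ∈ B) → ∃ k : ℕ → ℕ, StrictMono k ∧
    Tendsto (fun pq : ℕ × ℕ => ρ (u (k pq.1)) (u (k pq.2))) atTop (𝓝 0)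

def IsContractiveOn (φ : X → X → ℝ) (B : Set X) : Prop :=
  ∀ u : ℕ → X, (∀ n, u n ∈ B) → ∃ k : ℕ → ℕ, StrictMono k ∧ ∃ L : ℕ → ℝ,
    (∀ p, Tendsto (fun l => φ (u (k p)) (u (k l))) atTop (𝓝 (L p))) ∧ Tendsto L atTop (𝓝 0)

theorem isPrecompactOn_of_nonneg {ρ : X → X → ℝ} {B : Set X} (h₀ : ∀ x y, 0 ≤ ρ x y)
    (h : ∀ u : ℕ → X, (∀ n, u n ∈ B) → ∃ k : ℕ → ℕ, StrictMono k ∧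
      ∀ ε : ℝ, 0 < ε → ∃ N : ℕ, ∀ p q : ℕ, N ≤ p → N ≤ q → ρ (u (k p)) (u (k q)) ≤ ε) :
    IsPrecompactOn ρ B := by
  intro u hu
  obtain ⟨k, hk, hcauchy⟩ := h u hu
  refine ⟨k, hk, Metric.tendsto_nhds.2 fun ε hε => eventually_atTop_prod_self.2 ?_⟩
  obtain ⟨N, hN⟩ := hcauchy (ε / 2) (half_pos hε)
  refine ⟨N, fun p q hp hq => ?_⟩
  rw [Real.dist_0_eq_abs, abs_of_nonneg (h₀ _ _)]
  linarith [hN p q hp hq]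

theorem IsPrecompactOn.comp_pi {ι : Type*} [Finite ι] {ρ : ι → X → X → ℝ} {B : Set X}
    (hρ : ∀ i, IsPrecompactOn (ρ i) B) {g : (ι → ℝ) → ℝ} (hg : ContinuousAt g 0)
    (hg0 : g 0 = 0) : IsPrecompactOn (fun x y => g fun i => ρ i x y) B := by
  intro u hu
  obtain ⟨k, hk, hρk⟩ := exists_strictMono_forall_of_finite
    (fun i v => Tendsto (fun pq : ℕ × ℕ => ρ i (v pq.1) (v pq.2)) atTop (𝓝 0))
    (fun _ _ k hk h => h.comp (hk.tendsto_atTop.prod_atTop hk.tendsto_atTop)) hρ u hu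
  refine ⟨k, hk, ?_⟩
  have := hg.tendsto.comp (tendsto_pi_nhds.2 hρk)
  rw [hg0] at this
  exact this

variable [MetricSpace X]

theorem kuratowski_nonneg (A : Set X) : 0 ≤ kuratowski A :=
  Real.sInf_nonneg fun _ hδ => hδ.1.le

theorem kuratowski_le {A : Set X} {δ : ℝ} (hδ : 0 < δ) (𝓒 : Finset (Set X))
    (hcov : A ⊆ ⋃ s ∈ 𝓒, s) (hdiam : ∀ s ∈ 𝓒, diam s < δ) : kuratowski A ≤ δ :=
  csInf_le ⟨0, fun _ hδ => hδ.1.le⟩ ⟨hδ, 𝓒, hcov, hdiam⟩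

/-- Mathlib gives unbounded sets diameter `0`, so in an unbounded space the cover `{univ}`
witnesses every `δ > 0`. -/
theorem kuratowski_eq_zero_of_not_boundedSpace (hX : ¬BoundedSpace X) (A : Set X) :
    kuratowski A = 0 := by
  refine le_antisymm (le_of_forall_gt_imp_ge_of_dense fun δ hδ => ?_) (kuratowski_nonneg A)
  refine kuratowski_le hδ {univ} (by simp) fun s hs => ?_
  rw [Finset.mem_singleton.1 hs, diam_eq_zero_of_unbounded (mt Bornology.isBounded_univ.1 hX)]
  exact hδ

theorem kuratowski_le_two_mul_of_subset_biUnion_ball {A : Set X} {r : ℝ} (hr : 0 < r)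
    {F : Finset X} (hF : A ⊆ ⋃ x ∈ F, ball x r) : kuratowski A ≤ 2 * r := by
  classical
  refine le_of_forall_gt_imp_ge_of_dense fun δ hδ => kuratowski_le (by linarith)
    (F.image fun x => ball x r) ?_ ?_
  · simpa using hF
  · simp only [Finset.mem_image]
    rintro _ ⟨x, -, rfl⟩
    exact (diam_ball hr.le).trans_lt hδ

theorem exists_kuratowski_cover [BoundedSpace X] (A : Set X) :
    ∃ δ, 0 < δ ∧ ∃ 𝓒 : Finset (Set X), (A ⊆ ⋃ s ∈ 𝓒, s) ∧ ∀ s ∈ 𝓒, diam s < δ :=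
  ⟨diam (univ : Set X) + 1, by linarith [diam_nonneg (s := (univ : Set X))], {univ},
    by simp, fun s hs => by rw [Finset.mem_singleton.1 hs]; linarith⟩

def HasSeparatedSeq (A : Set X) (r : ℝ) : Prop :=
  ∃ u : ℕ → X, (∀ n, u n ∈ A) ∧ ∀ i j, i < j → r ≤ dist (u i) (u j)

noncomputable def istratescu (A : Set X) : ℝ :=
  sInf {r | 0 < r ∧ ¬HasSeparatedSeq A r}

theorem HasSeparatedSeq.lt_of_cover [BoundedSpace X] {A : Set X} {r δ : ℝ}
    (hA : HasSeparatedSeq A r) {𝓒 : Finset (Set X)} (hcov : A ⊆ ⋃ s ∈ 𝓒, s)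
    (hdiam : ∀ s ∈ 𝓒, diam s < δ) : r < δ := by
  obtain ⟨u, hu, hsep⟩ := hA
  have hmem : ∀ n, ∃ s ∈ 𝓒, u n ∈ s := fun n => by simpa using hcov (hu n)
  choose s hs𝓒 hus using hmem
  obtain ⟨i, j, hij, hsij⟩ := Set.Finite.exists_lt_map_eq_of_forall_mem hs𝓒 𝓒.finite_toSet
  calc r ≤ dist (u i) (u j) := hsep i j hij
    _ ≤ diam (s i) := dist_le_diam_of_mem (.all _) (hus i) (hsij ▸ hus j)
    _ < δ := hdiam _ (hs𝓒 i)

theorem exists_subset_biUnion_ball_of_not_hasSeparatedSeq {A : Set X} {r : ℝ}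
    (h : ¬HasSeparatedSeq A r) : ∃ F : Finset X, A ⊆ ⋃ x ∈ F, ball x r := by
  by_contra! hF
  refine h <| exists_seq_of_forall_finset_exists (· ∈ A) (fun x y => r ≤ dist x y) fun F _ => ?_
  obtain ⟨y, hyA, hy⟩ := not_subset.1 (hF F)
  simp only [mem_iUnion, mem_ball, not_exists, not_lt] at hy
  exact ⟨y, hyA, fun x hx => dist_comm x y ▸ hy x hx⟩

theorem exists_not_hasSeparatedSeq [BoundedSpace X] (A : Set X) :
    ∃ r, 0 < r ∧ ¬HasSeparatedSeq A r := by
  obtain ⟨δ, hδ, 𝓒, hcov, hdiam⟩ := exists_kuratowski_cover A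
  exact ⟨δ, hδ, fun h => (h.lt_of_cover hcov hdiam).false⟩

theorem istratescu_nonneg (A : Set X) : 0 ≤ istratescu A :=
  Real.sInf_nonneg fun _ hr => hr.1.le

theorem istratescu_le {A : Set X} {r : ℝ} (hr : 0 < r) (h : ¬HasSeparatedSeq A r) :
    istratescu A ≤ r :=
  csInf_le ⟨0, fun _ hr => hr.1.le⟩ ⟨hr, h⟩

theorem istratescu_mono [BoundedSpace X] {A B : Set X} (hAB : A ⊆ B) :
    istratescu A ≤ istratescu B :=
  csInf_le_csInf ⟨0, fun _ hr => hr.1.le⟩ (exists_not_hasSeparatedSeq B)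
    fun _ ⟨hr, h⟩ => ⟨hr, fun ⟨u, hu, hsep⟩ => h ⟨u, fun n => hAB (hu n), hsep⟩⟩

theorem istratescu_le_kuratowski [BoundedSpace X] (A : Set X) :
    istratescu A ≤ kuratowski A :=
  le_csInf (exists_kuratowski_cover A) fun _ ⟨hδ, _, hcov, hdiam⟩ =>
    istratescu_le hδ fun h => (h.lt_of_cover hcov hdiam).false

theorem kuratowski_le_two_mul_istratescu [BoundedSpace X] (A : Set X) :
    kuratowski A ≤ 2 * istratescu A := by
  have : kuratowski A / 2 ≤ istratescu A :=
    le_csInf (exists_not_hasSeparatedSeq A) fun r ⟨hr, h⟩ => by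
      obtain ⟨F, hF⟩ := exists_subset_biUnion_ball_of_not_hasSeparatedSeq h
      linarith [kuratowski_le_two_mul_of_subset_biUnion_ball hr hF]
  linarith

/-- `ψ` stands for the term `g (ϱ₁ y₁ y₂, …, ϱₘ y₁ y₂)` of the quasi-stability estimate. -/
structure IsQuasiStableOn (F : X → X) (B : Set X) (η : ℝ) (ψ φ : X → X → ℝ) : Prop where
  nonneg : 0 ≤ η
  precompactOn : IsPrecompactOn ψ B
  contractiveOn : IsContractiveOn φ B
  dist_le : ∀ y₁ ∈ B, ∀ y₂ ∈ B, dist (F y₁) (F y₂) ≤ η * dist y₁ y₂ + ψ y₁ y₂ + φ y₁ y₂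

namespace IsQuasiStableOn

variable {F : X → X} {B : Set X} {η : ℝ} {ψ φ : X → X → ℝ}

theorem exists_dist_lt (hF : IsQuasiStableOn F B η ψ φ) {y : ℕ → X} (hy : ∀ n, y n ∈ B)
    {r r' : ℝ} (hclose : ∀ i j, i < j → dist (y i) (y j) < r) (hr : η * r < r') :
    ∃ i j, i < j ∧ dist (F (y i)) (F (y j)) < r' := by
  obtain ⟨ε, hε, hεr⟩ : ∃ ε, 0 < ε ∧ η * r + 3 * ε < r' :=
    ⟨(r' - η * r) / 4, by linarith, by linarith⟩
  obtain ⟨k₁, hk₁, hψ⟩ := hF.precompactOn y hy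
  obtain ⟨k₂, hk₂, L, hφ, hL⟩ := hF.contractiveOn (y ∘ k₁) fun n => hy _
  obtain ⟨N, hN⟩ := eventually_atTop_prod_self.1 <|
    (hψ.comp (hk₂.tendsto_atTop.prod_atTop hk₂.tendsto_atTop)).eventually (gt_mem_nhds hε)
  obtain ⟨p, hpN, hLp⟩ := ((eventually_ge_atTop N).and (hL.eventually (gt_mem_nhds hε))).exists
  obtain ⟨l, hpl, hφpl⟩ : ∃ l, p < l ∧ φ (y (k₁ (k₂ p))) (y (k₁ (k₂ l))) < ε :=
    ((eventually_gt_atTop p).and ((hφ p).eventually (gt_mem_nhds hLp))).exists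
  have hkpl : k₁ (k₂ p) < k₁ (k₂ l) := hk₁ (hk₂ hpl)
  refine ⟨_, _, hkpl, ?_⟩
  have hψpl : ψ (y (k₁ (k₂ p))) (y (k₁ (k₂ l))) < ε := hN p l hpN (hpN.trans hpl.le)
  have hdist := mul_le_mul_of_nonneg_left (hclose _ _ hkpl).le hF.nonneg
  linarith [hF.dist_le _ (hy (k₁ (k₂ p))) _ (hy (k₁ (k₂ l)))]

theorem not_hasSeparatedSeq_image (hF : IsQuasiStableOn F B η ψ φ) {A : Set X} (hA : A ⊆ B)
    {r r' : ℝ} (hsep : ¬HasSeparatedSeq A r) (hr : η * r < r') :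
    ¬HasSeparatedSeq (F '' A) r' := by
  rintro ⟨z, hz, hzsep⟩
  choose y hyA hyz using hz
  obtain ⟨k, hk, hclose | hfar⟩ :=
    exists_strictMono_forall_or_forall_not fun a b => dist (y a) (y b) < r
  · obtain ⟨i, j, hij, hlt⟩ := hF.exists_dist_lt (fun n => hA (hyA (k n))) hclose hr
    have := hzsep _ _ (hk hij)
    rw [← hyz, ← hyz] at this
    linarith
  · exact hsep ⟨y ∘ k, fun n => hyA (k n), fun i j hij => not_lt.1 (hfar i j hij)⟩

theorem istratescu_image_le [BoundedSpace X] (hF : IsQuasiStableOn F B η ψ φ) {A : Set X}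
    (hA : A ⊆ B) :
    istratescu (F '' A) ≤ η * istratescu A := by
  unfold istratescu
  rw [← smul_eq_mul, ← Real.sInf_smul_of_nonneg hF.nonneg]
  refine le_csInf (Set.Nonempty.smul_set (exists_not_hasSeparatedSeq A)) ?_
  rintro _ ⟨r, ⟨hr, hsep⟩, rfl⟩
  refine le_of_forall_gt_imp_ge_of_dense fun r' hr' => istratescu_le ?_
    (hF.not_hasSeparatedSeq_image hA hsep hr')
  exact lt_of_le_of_lt (mul_nonneg hF.nonneg hr.le) hr'

theorem istratescu_iterate_image_le [BoundedSpace X] (hF : IsQuasiStableOn F B η ψ φ)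
    (hB : MapsTo F B B) {A : Set X} (hA : A ⊆ B) (n : ℕ) :
    istratescu (F^[n] '' A) ≤ η ^ n * istratescu A := by
  induction n with
  | zero => simp
  | succ n ih =>
    rw [Function.iterate_succ', image_comp, pow_succ', mul_assoc]
    calc istratescu (F '' (F^[n] '' A)) ≤ η * istratescu (F^[n] '' A) :=
          hF.istratescu_image_le ((hB.iterate n).mono_left hA).image_subset
      _ ≤ η * (η ^ n * istratescu A) := mul_le_mul_of_nonneg_left ih hF.nonneg

end IsQuasiStableOn

end

theorem stmt_11_general {X : Type*} [MetricSpace X] {m : ℕ}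
    (S : ℝ → X → X)
    (hSadd : ∀ s t : ℝ, 0 ≤ s → 0 ≤ t → ∀ x, S (s + t) x = S s (S t x))
    (𝓑₀ : Set X)
    (hBinv : ∀ t : ℝ, 0 ≤ t → S t '' 𝓑₀ ⊆ 𝓑₀)
    (T : ℝ) (hT : 0 < T)
    (η : ℝ) (hη : 0 ≤ η) (hη1 : η < 1)
    (g : (Fin m → ℝ) → ℝ)
    (hg0 : g 0 = 0) (hgcont : ContinuousAt g 0)
    (φ : X → X → ℝ)
    (hφsub : ∀ y : ℕ → X, (∀ n, y n ∈ 𝓑₀) →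
      ∃ k : ℕ → ℕ, StrictMono k ∧ ∃ L : ℕ → ℝ,
        (∀ p : ℕ, Tendsto (fun l => φ (y (k p)) (y (k l))) atTop (nhds (L p))) ∧
        Tendsto L atTop (nhds 0))
    (ϱ : Fin m → X → X → ℝ)
    (hϱpos : ∀ i x y, 0 ≤ ϱ i x y)
    (hϱpre : ∀ i, ∀ y : ℕ → X, (∀ n, y n ∈ 𝓑₀) →
      ∃ k : ℕ → ℕ, StrictMono k ∧
        ∀ ε : ℝ, 0 < ε → ∃ N : ℕ, ∀ p q : ℕ, N ≤ p → N ≤ q → ϱ i (y (k p)) (y (k q)) ≤ ε)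
    (hquasi : ∀ y₁ ∈ 𝓑₀, ∀ y₂ ∈ 𝓑₀,
      dist (S T y₁) (S T y₂) ≤ η * dist y₁ y₂ + g (fun i => ϱ i y₁ y₂) + φ y₁ y₂) :
    ∀ t : ℝ, T ≤ t → kuratowski (S t '' 𝓑₀) ≤ 2 * η ^ (t / T - 1) * kuratowski 𝓑₀ := by
  intro t ht
  by_cases hX : BoundedSpace X
  swap
  · simp [kuratowski_eq_zero_of_not_boundedSpace hX]
  have hF : IsQuasiStableOn (S T) 𝓑₀ η (fun x y => g fun i => ϱ i x y) φ :=
    ⟨hη, .comp_pi (fun i => isPrecompactOn_of_nonneg (hϱpos i) (hϱpre i)) hgcont hg0,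
      hφsub, hquasi⟩
  have htT : 0 ≤ t / T - 1 := by rwa [sub_nonneg, one_le_div hT]
  set n := ⌊t / T - 1⌋₊
  have hn : ((n : ℝ) + 1) * T ≤ t := by
    rw [← le_div_iff₀ hT]
    linarith [Nat.floor_le htT]
  have hpow : η ^ (n + 1) ≤ η ^ (t / T - 1) := by
    rw [← Real.rpow_natCast, Nat.cast_succ]
    exact Real.rpow_le_rpow_of_exponent_ge' hη hη1.le htT (Nat.lt_floor_add_one _).le
  calc kuratowski (S t '' 𝓑₀)
      ≤ 2 * istratescu (S t '' 𝓑₀) := kuratowski_le_two_mul_istratescu _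
    _ ≤ 2 * istratescu ((S T)^[n + 1] '' 𝓑₀) := by
      gcongr
      exact istratescu_mono (image_subset_iterate_image hSadd hBinv hT.le n hn)
    _ ≤ 2 * (η ^ (n + 1) * istratescu 𝓑₀) := by
      gcongr
      exact hF.istratescu_iterate_image_le (mapsTo_iff_image_subset.2 (hBinv T hT.le)) le_rfl _
    _ ≤ 2 * η ^ (t / T - 1) * kuratowski 𝓑₀ := by
      rw [mul_assoc]
      gcongr 2 * ?_
      exact mul_le_mul hpow (istratescu_le_kuratowski 𝓑₀) (istratescu_nonneg 𝓑₀)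
        (Real.rpow_nonneg hη _)

theorem stmt_11 {X : Type*} [MetricSpace X] [CompleteSpace X] {m : ℕ}
    (S : ℝ → X → X)
    (hcont : ∀ t, 0 ≤ t → Continuous (S t))
    (hS0 : ∀ x, S 0 x = x)
    (hSadd : ∀ s t : ℝ, 0 ≤ s → 0 ≤ t → ∀ x, S (s + t) x = S s (S t x))
    (𝓑₀ : Set X) (hBbdd : Bornology.IsBounded 𝓑₀)
    (hBinv : ∀ t : ℝ, 0 ≤ t → S t '' 𝓑₀ ⊆ 𝓑₀)
    (habs : ∀ B : Set X, Bornology.IsBounded B → ∃ tB : ℝ, 0 ≤ tB ∧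
      ∀ t : ℝ, tB ≤ t → S t '' B ⊆ 𝓑₀)
    (T : ℝ) (hT : 0 < T)
    (η : ℝ) (hη : 0 ≤ η) (hη1 : η < 1)
    (g : (Fin m → ℝ) → ℝ) (hgpos : ∀ v, 0 ≤ g v)
    (hgmono : ∀ v w : Fin m → ℝ, (∀ i, v i ≤ w i) → g v ≤ g w)
    (hg0 : g 0 = 0) (hgcont : ContinuousAt g 0)
    (φ : X → X → ℝ) (hφpos : ∀ x y, 0 ≤ φ x y)
    (hφsub : ∀ y : ℕ → X, (∀ n, y n ∈ 𝓑₀) →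
      ∃ k : ℕ → ℕ, StrictMono k ∧ ∃ L : ℕ → ℝ,
        (∀ p : ℕ, Tendsto (fun l => φ (y (k p)) (y (k l))) atTop (nhds (L p))) ∧
        Tendsto L atTop (nhds 0))
    (ϱ : Fin m → X → X → ℝ)
    (hϱpos : ∀ i x y, 0 ≤ ϱ i x y)
    (hϱsymm : ∀ i x y, ϱ i x y = ϱ i y x)
    (hϱdiag : ∀ i x, ϱ i x x = 0)
    (hϱtri : ∀ i x y z, ϱ i x z ≤ ϱ i x y + ϱ i y z)
    (hϱpre : ∀ i, ∀ y : ℕ → X, (∀ n, y n ∈ 𝓑₀) →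
      ∃ k : ℕ → ℕ, StrictMono k ∧
        ∀ ε : ℝ, 0 < ε → ∃ N : ℕ, ∀ p q : ℕ, N ≤ p → N ≤ q → ϱ i (y (k p)) (y (k q)) ≤ ε)
    (hquasi : ∀ y₁ ∈ 𝓑₀, ∀ y₂ ∈ 𝓑₀,
      dist (S T y₁) (S T y₂) ≤ η * dist y₁ y₂ + g (fun i => ϱ i y₁ y₂) + φ y₁ y₂) :
    ∀ t : ℝ, T ≤ t → kuratowski (S t '' 𝓑₀) ≤ 2 * η ^ (t / T - 1) * kuratowski 𝓑₀ :=
  stmt_11_general S hSadd 𝓑₀ hBinv T hT η hη hη1 g hg0 hgcont φ hφsub ϱ hϱpos hϱpre hquasi
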